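/- arXiv:2512.17014 — 3 statements merged into one kernel-verified Lean document; each statement's English description precedes it below -/
import Mathlib

section
/- Let n be a nonempty finite type with decidable equality, let ρ be a density matrix on ℂ^n (a positive semidefinite matrix in Matrix n n ℂ with trace 1), and let ρ^{1/2} be its positive semidefinite square root. Then for every N and every pair of finite families a, b : Fin N → Matrix n n ℂ, the complex number ∑_{j,k} tr(ρ^{1/2} * (a j)ᴴ * (a k) * ρ^{1/2} * (b k) * (b j)ᴴ) is a nonnegative real number, i.e. its imaginary part is zero and its real part is nonnegative. (Equivalently, it equals the squared Frobenius norm of ∑_j (a j) * ρ^{1/2} * (b j)ᴴ.) This expresses that the canonical purification functional ω̂(a ⊗ bᵒᵖ) = tr(ρ^{1/2} a ρ^{1/2} b), defined on Mat_n(ℂ) ⊗ Mat_n(ℂ)^op with the reversed multiplication in the second factor, is a positive linear functional. -/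
/-!
Since `√ρ` is Hermitian, the cyclicity of the trace turns the double sum into `tr (Sᴴ * S)` with
`S = ∑ k, a k * √ρ * b k`, and `Sᴴ * S` is positive semidefinite.
-/

open Matrix ComplexOrder

/-- The positive semidefinite square root, as defined in Mathlib of December 2024
(`Matrix.PosSemidef.sqrt`, since removed from Mathlib). -/
noncomputable def Matrix.PosSemidef.sqrt {n : Type*} {𝕜 : Type*} [Fintype n] [RCLike 𝕜]
    [DecidableEq n] {A : Matrix n n 𝕜} (hA : A.PosSemidef) : Matrix n n 𝕜 :=
  (hA.1.eigenvectorUnitary : Matrix n n 𝕜) *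
    diagonal (((↑) : ℝ → 𝕜) ∘ (Real.sqrt ·) ∘ hA.1.eigenvalues) *
    (star hA.1.eigenvectorUnitary : Matrix n n 𝕜)

theorem Matrix.PosSemidef.isHermitian_sqrt {n 𝕜 : Type*} [Fintype n] [RCLike 𝕜]
    [DecidableEq n] {A : Matrix n n 𝕜} (hA : A.PosSemidef) : hA.sqrt.IsHermitian :=
  isHermitian_mul_mul_conjTranspose _ <| isHermitian_diagonal_iff.mpr fun _ =>
    RCLike.conj_ofReal _

theorem Matrix.sum_sum_trace_eq_trace_conjTranspose_mul_self {n ι R : Type*} [Fintype n] [Fintype ι]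
    [CommSemiring R] [StarRing R] {s : Matrix n n R} (hs : s.IsHermitian)
    (a b : ι → Matrix n n R) :
    ∑ j, ∑ k, (s * (a j)ᴴ * a k * s * b k * (b j)ᴴ).trace =
      ((∑ j, a j * s * b j)ᴴ * ∑ k, a k * s * b k).trace := by
  simp only [conjTranspose_sum, Finset.sum_mul_sum, trace_sum, conjTranspose_mul, hs.eq]
  refine Fintype.sum_congr _ _ fun j => Fintype.sum_congr _ _ fun k => ?_
  rw [trace_mul_comm]
  simp only [mul_assoc]

theorem canonical_purification_positive_general
    (n : Type*) [Fintype n] [DecidableEq n]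
    (ρ : Matrix n n ℂ) (hρ : ρ.PosSemidef)
    (N : ℕ) (a b : Fin N → Matrix n n ℂ) :
    (∑ j : Fin N, ∑ k : Fin N,
        (hρ.sqrt * (a j)ᴴ * a k * hρ.sqrt * b k * (b j)ᴴ).trace).im = 0 ∧
    0 ≤ (∑ j : Fin N, ∑ k : Fin N,
        (hρ.sqrt * (a j)ᴴ * a k * hρ.sqrt * b k * (b j)ᴴ).trace).re := by
  rw [sum_sum_trace_eq_trace_conjTranspose_mul_self hρ.isHermitian_sqrt]
  obtain ⟨hre, him⟩ := Complex.nonneg_iff.mp <|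
    (posSemidef_conjTranspose_mul_self (∑ k, a k * hρ.sqrt * b k)).trace_nonneg
  exact ⟨him.symm, hre⟩

/-- Positivity of the canonical purification functional
`ω̂(a ⊗ bᵒᵖ) = tr(√ρ a √ρ b)` on `Mat_n(ℂ) ⊗ Mat_n(ℂ)ᵒᵖ`:
for any finite families `a b : Fin N → Matrix n n ℂ`, the sum
`∑ j k, tr(√ρ * (a j)ᴴ * a k * √ρ * b k * (b j)ᴴ)` is a nonnegative real. -/
theorem canonical_purification_positive
    (n : Type*) [Fintype n] [DecidableEq n] [Nonempty n]
    (ρ : Matrix n n ℂ) (hρ : ρ.PosSemidef) (htr : ρ.trace = 1)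
    (N : ℕ) (a b : Fin N → Matrix n n ℂ) :
    (∑ j : Fin N, ∑ k : Fin N,
        (hρ.sqrt * (a j)ᴴ * a k * hρ.sqrt * b k * (b j)ᴴ).trace).im = 0 ∧
    0 ≤ (∑ j : Fin N, ∑ k : Fin N,
        (hρ.sqrt * (a j)ᴴ * a k * hρ.sqrt * b k * (b j)ᴴ).trace).re :=
  canonical_purification_positive_general n ρ hρ N a b
end

section
/- Faithfulness of the extended state: let H be a complex Hilbert space, M a von Neumann algebra on H, and ω ∈ H. Let K be the topological closure of the ℂ-submodule spanned by { a' ω | a' ∈ M' }, let (e_i)_{i : ι} be a Hilbert basis of the orthogonal complement Kᗮ, and let c : ι → ℝ be a summable family with c i > 0 for every i. Then for every L ∈ M, if ‖L ω‖² + ∑'_i c i * ‖L (e_i)‖² = 0, then L = 0. (This is the faithfulness of the state φ(L) = ½(⟨ω, Lω⟩ + ∑_i c_i ⟨e_i, L e_i⟩) used to extend a non-separating state to a separating one.) -/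
/-!
Since `L ∈ M` commutes with `M'`, `L ω = 0` forces `L` to vanish on `M' ω`, hence on its closed
span `K`. The weighted sum vanishing with positive weights forces `L` to vanish on the Hilbert
basis of `Kᗮ`, hence on `Kᗮ`. As `K` is closed, `K ⊔ Kᗮ` is the whole space.
-/

open Submodule

namespace HilbertBasis

variable {ι 𝕜 E : Type*} [RCLike 𝕜] [NormedAddCommGroup E] [InnerProductSpace 𝕜 E]

theorem ext_continuousLinearMap {F : Type*} [TopologicalSpace F] [AddCommMonoid F] [Module 𝕜 F]
    [T2Space F] (b : HilbertBasis ι 𝕜 E) {f g : E →L[𝕜] F}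
    (h : ∀ i, f (b i) = g (b i)) : f = g :=
  ContinuousLinearMap.ext_on (dense_iff_topologicalClosure_eq_top.2 b.dense_span)
    (by rintro _ ⟨i, rfl⟩; exact h i)

theorem summable_mul_norm_apply_sq {F : Type*} [SeminormedAddCommGroup F] [NormedSpace 𝕜 F]
    (b : HilbertBasis ι 𝕜 E) (T : E →L[𝕜] F) {c : ι → ℝ} (hc : Summable c)
    (hc0 : ∀ i, 0 ≤ c i) : Summable fun i => c i * ‖T (b i)‖ ^ 2 := by
  refine (hc.mul_right (‖T‖ ^ 2)).of_nonneg_of_le (fun i => mul_nonneg (hc0 i) (by positivity))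
    fun i => ?_
  have hTb : ‖T (b i)‖ ≤ ‖T‖ := by simpa [b.orthonormal.1 i] using T.le_opNorm (b i)
  gcongr
  exact hc0 i

theorem continuousLinearMap_eq_zero_of_tsum_mul_norm_sq_eq_zero {F : Type*}
    [NormedAddCommGroup F] [NormedSpace 𝕜 F] (b : HilbertBasis ι 𝕜 E) (T : E →L[𝕜] F)
    {c : ι → ℝ} (hc : Summable c) (hcpos : ∀ i, 0 < c i)
    (h0 : ∑' i, c i * ‖T (b i)‖ ^ 2 = 0) : T = 0 := by
  have hsum := b.summable_mul_norm_apply_sq T hc fun i => (hcpos i).le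
  have hterms : (fun i => c i * ‖T (b i)‖ ^ 2) = 0 :=
    (hasSum_zero_iff_of_nonneg fun i => by have := hcpos i; positivity).1 (h0 ▸ hsum.hasSum)
  refine b.ext_continuousLinearMap fun i => ?_
  simpa [(hcpos i).ne'] using congr_fun hterms i

end HilbertBasis

theorem VonNeumannAlgebra.topologicalClosure_span_commutant_orbit_le_ker
    {H : Type*} [NormedAddCommGroup H] [InnerProductSpace ℂ H] [CompleteSpace H]
    (M : VonNeumannAlgebra H) {ω : H} {L : H →L[ℂ] H} (hL : L ∈ M) (hω : L ω = 0) :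
    (span ℂ { x : H | ∃ a' ∈ M.commutant, x = a' ω }).topologicalClosure ≤
      LinearMap.ker (L : H →ₗ[ℂ] H) := by
  refine topologicalClosure_minimal _ (span_le.2 ?_) L.isClosed_ker
  rintro _ ⟨a', ha', rfl⟩
  have hcomm : L * a' = a' * L := mem_commutant_iff.1 ha' L hL
  change (L * a') ω = 0
  rw [hcomm]
  change a' (L ω) = 0
  rw [hω, map_zero]

theorem ContinuousLinearMap.eq_zero_of_le_ker_of_orthogonal_le_ker {𝕜 E F : Type*} [RCLike 𝕜]
    [NormedAddCommGroup E] [InnerProductSpace 𝕜 E] [TopologicalSpace F] [AddCommMonoid F]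
    [Module 𝕜 F] {K : Submodule 𝕜 E} [K.HasOrthogonalProjection] {T : E →L[𝕜] F}
    (hK : K ≤ LinearMap.ker (T : E →ₗ[𝕜] F))
    (hKperp : Kᗮ ≤ LinearMap.ker (T : E →ₗ[𝕜] F)) :
    T = 0 := by
  have hker : LinearMap.ker (T : E →ₗ[𝕜] F) = ⊤ :=
    top_unique (sup_orthogonal_of_hasOrthogonalProjection (K := K) ▸ sup_le hK hKperp)
  ext x
  exact LinearMap.mem_ker.1 (hker ▸ mem_top : x ∈ LinearMap.ker (T : E →ₗ[𝕜] F))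

/-- Faithfulness of the extended state: let `K` be the closure of `M' ω`,
let `(e i)` be a Hilbert basis of `Kᗮ`, and let `c : ι → ℝ` be a summable
family of positive weights.  If `L ∈ M` satisfies
`‖L ω‖² + ∑' i, c i * ‖L (e i)‖² = 0`, then `L = 0`.  (This is faithfulness
of the state `φ(L) = ½(⟨ω, Lω⟩ + ∑ i c i ⟨e i, L (e i)⟩)` used to extend a
non-separating state to a separating one.) -/
theorem extended_state_faithful
    (H : Type*) [NormedAddCommGroup H] [InnerProductSpace ℂ H] [CompleteSpace H]
    (M : VonNeumannAlgebra H) (ω : H) {ι : Type*}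
    (K : Submodule ℂ H)
    (hK : K = (Submodule.span ℂ { x : H | ∃ a' ∈ M.commutant, x = a' ω }).topologicalClosure)
    (e : HilbertBasis ι ℂ Kᗮ)
    (c : ι → ℝ) (hc : Summable c) (hcpos : ∀ i, 0 < c i)
    (L : H →L[ℂ] H) (hL : L ∈ M)
    (h0 : ‖L ω‖ ^ 2 + ∑' i, c i * ‖L ((e i : Kᗮ) : H)‖ ^ 2 = 0) :
    L = 0 := by
  obtain ⟨hω, hsum⟩ := (add_eq_zero_iff_of_nonneg (by positivity)
    (tsum_nonneg fun i => by have := hcpos i; positivity)).1 h0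
  have : CompleteSpace K :=
    (hK ▸ isClosed_topologicalClosure _ : IsClosed (K : Set H)).completeSpace_coe
  have hLK : L.comp Kᗮ.subtypeL = 0 :=
    e.continuousLinearMap_eq_zero_of_tsum_mul_norm_sq_eq_zero _ hc hcpos hsum
  refine ContinuousLinearMap.eq_zero_of_le_ker_of_orthogonal_le_ker (K := K) ?_ ?_
  · exact hK ▸ M.topologicalClosure_span_commutant_orbit_le_ker hL (by simpa using hω)
  · intro x hx
    simpa using congr($hLK ⟨x, hx⟩)
end

section
/- Purity of a vector state is equivalent to triviality of the commutant: let H be a complex Hilbert space, A a star-subalgebra of the bounded operators H →L[ℂ] H containing the identity, and Ω ∈ H a unit vector cyclic for A, i.e. { a Ω | a ∈ A } spans a dense subspace of H. Define ω : A → ℂ by ω(a) = ⟪Ω, a Ω⟫. Then the following are equivalent: (1) for every linear functional ψ : A →ₗ[ℂ] ℂ such that ψ(star a * a) is a nonnegative real with ψ(star a * a) ≤ ‖a Ω‖² for all a ∈ A, there exists a real λ with 0 ≤ λ ≤ 1 and ψ(a) = λ * ω(a) for all a ∈ A; (2) every bounded operator T : H →L[ℂ] H that commutes with every element of A is a complex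 scalar multiple of the identity. -/
/-!
`(2) ⇒ (1)`: a dominated positive `ψ` gives the sesquilinear form `(a, b) ↦ ψ (star a * b)` on
`A`, which by Cauchy–Schwarz is bounded by `‖a Ω‖ * ‖b Ω‖`. As `A Ω` is dense, the form is
represented by an operator `T` with `⟪a Ω, T (b Ω)⟫ = ψ (star a * b)`, and `T` commutes with `A`.
Hence `T = c • 1`, so `ψ = c ω` and `0 ≤ c = ψ 1 ≤ 1`.

`(1) ⇒ (2)`: an operator `0 ≤ Q ≤ 1` commuting with `A` makes `a ↦ ⟪Ω, Q (a Ω)⟫` dominated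
positive; if it equals `c ω` then `⟪a Ω, Q (b Ω)⟫ = c ⟪a Ω, b Ω⟫`, so `Q = c • 1`. A self-adjoint
element of the commutant is an affine function of such a `Q`, and every element `T` of the
commutant is `ℜ T + I • ℑ T` with both parts self-adjoint elements of the commutant.
-/

open scoped ComplexOrder InnerProductSpace ComplexStarModule

namespace LinearMap

variable {M : Type*} [AddCommGroup M] [Module ℂ M] {B : M →ₗ⋆[ℂ] M →ₗ[ℂ] ℂ}

-- Polarization: the diagonal values at `x + y` and at `x + I • y` are real.
theorem IsNonneg.isSymm (hB : B.IsNonneg) : B.IsSymm := by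
  have him : ∀ x, (B x x).im = 0 := fun x => (Complex.le_def.mp (hB.nonneg x)).2.symm
  refine isSymm_def.mpr fun x y => Complex.ext ?_ ?_
  · have e : B (x + Complex.I • y) (x + Complex.I • y)
        = B x x + B y y + Complex.I * (B x y - B y x) := by
      simp only [map_add, map_smulₛₗ, add_apply, smul_apply, smul_eq_mul, Complex.conj_I,
        RingHom.id_apply]
      linear_combination (-B y y) * Complex.I_mul_I
    have h := him (x + Complex.I • y)
    rw [e] at h
    simp only [Complex.add_im, him, Complex.mul_im, Complex.I_re, Complex.I_im, Complex.sub_re] at h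
    rw [Complex.conj_re]
    linarith
  · have h := him (x + y)
    simp only [map_add, add_apply, Complex.add_im, him] at h
    rw [Complex.conj_im]
    linarith

abbrev IsNonneg.preInnerProductSpaceCore (hB : B.IsNonneg) : PreInnerProductSpace.Core ℂ M where
  inner x y := B x y
  conj_inner_symm x y := hB.isSymm.eq y x
  re_inner_nonneg x := (Complex.le_def.mp (hB.nonneg x)).1
  add_left x y z := by simp
  smul_left x y r := by simp

theorem IsNonneg.norm_apply_sq_le (hB : B.IsNonneg) (x y : M) :
    ‖B x y‖ ^ 2 ≤ (B x x).re * (B y y).re := by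
  let := hB.preInnerProductSpaceCore
  have h := InnerProductSpace.Core.inner_mul_inner_self_le (𝕜 := ℂ) x y
  rw [InnerProductSpace.Core.norm_inner_symm y x, ← sq] at h
  exact h

variable {R : Type*} [Ring R] [StarRing R] [Algebra ℂ R] [StarModule ℂ R]

def starMulForm (ψ : R →ₗ[ℂ] ℂ) : R →ₗ⋆[ℂ] R →ₗ[ℂ] ℂ :=
  LinearMap.mk₂'ₛₗ (starRingEnd ℂ) (RingHom.id ℂ) (fun x y => ψ (star x * y))
    (fun x x' y => by rw [star_add, add_mul, map_add])
    (fun c x y => by rw [star_smul, smul_mul_assoc, map_smul, Complex.star_def])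
    (fun x y y' => by rw [mul_add, map_add])
    (fun c x y => by rw [mul_smul_comm, map_smul, RingHom.id_apply])

@[simp]
theorem starMulForm_apply (ψ : R →ₗ[ℂ] ℂ) (x y : R) : ψ.starMulForm x y = ψ (star x * y) := rfl

end LinearMap

section DenseRange

variable {𝕜 M E : Type*} [RCLike 𝕜] [NormedAddCommGroup E] [InnerProductSpace 𝕜 E]

theorem ContinuousLinearMap.ext_inner_of_denseRange {u : M → E} (hu : DenseRange u)
    {S T : E →L[𝕜] E} (h : ∀ x y, ⟪u x, S (u y)⟫_𝕜 = ⟪u x, T (u y)⟫_𝕜) : S = T := by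
  have hST : ∀ y, S (u y) = T (u y) := fun y => ext_inner_left 𝕜 fun z =>
    congrFun (hu.equalizer (g := fun z => ⟪z, S (u y)⟫_𝕜) (h := fun z => ⟪z, T (u y)⟫_𝕜)
      (by fun_prop) (by fun_prop) (funext fun x => h x y)) z
  exact ContinuousLinearMap.ext fun z =>
    congrFun (hu.equalizer S.continuous T.continuous (funext hST)) z

variable [AddCommGroup M] [Module 𝕜 M] [CompleteSpace E] {u : M →ₗ[𝕜] E}

theorem exists_inner_map_eq_of_norm_le (hu : DenseRange u) (φ : M →ₗ⋆[𝕜] M →ₗ[𝕜] 𝕜)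
    {C : ℝ} (hC : 0 ≤ C) (hφ : ∀ x y, ‖φ x y‖ ≤ C * ‖u x‖ * ‖u y‖) :
    ∃ T : E →L[𝕜] E, ∀ x y, ⟪u x, T (u y)⟫_𝕜 = φ x y := by
  have hext : ∀ x y, (φ x).extendOfNorm u (u y) = φ x y := fun x =>
    LinearMap.extendOfNorm_eq hu ⟨C * ‖u x‖, hφ x⟩
  let Φ : M →ₗ⋆[𝕜] E →L[𝕜] 𝕜 :=
    { toFun x := (φ x).extendOfNorm u
      map_add' x x' := LinearMap.extendOfNorm_unique hu _ (hφ (x + x')) _ <| by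
        ext y; simp [hext]
      map_smul' c x := LinearMap.extendOfNorm_unique hu _ (hφ (c • x)) _ <| by
        ext y; simp [hext] }
  have hΦ : ∀ x, ‖Φ x‖ ≤ C * ‖u x‖ := fun x =>
    LinearMap.opNorm_extendOfNorm_le hu (by positivity) (hφ x)
  let B : E →L⋆[𝕜] E →L[𝕜] 𝕜 := Φ.extendOfNorm u
  refine ⟨(InnerProductSpace.continuousLinearMapOfBilin B).adjoint, fun x y => ?_⟩
  rw [ContinuousLinearMap.adjoint_inner_right, InnerProductSpace.continuousLinearMapOfBilin_apply,
    LinearMap.extendOfNorm_eq hu ⟨C, hΦ⟩]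
  exact hext x y

end DenseRange

section CStarAlgebra

variable {B : Type*} [CStarAlgebra B] [PartialOrder B] [StarOrderedRing B] {a : B}

theorem IsSelfAdjoint.smul_add_algebraMap_mem_Icc (ha : IsSelfAdjoint a) {r : ℝ} (hr : 0 < r)
    (har : ‖a‖ ≤ r) : (2 * r)⁻¹ • (a + algebraMap ℝ B r) ∈ Set.Icc 0 1 := by
  have h₀ : 0 ≤ a + algebraMap ℝ B r := neg_le_iff_add_nonneg.mp <|
    (neg_le_neg (algebraMap_mono B har)).trans ha.neg_algebraMap_norm_le_self
  have h₁ : a + algebraMap ℝ B r ≤ algebraMap ℝ B (2 * r) := by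
    rw [two_mul, map_add]
    exact add_le_add_left (ha.le_algebraMap_norm_self.trans (algebraMap_mono B har)) _
  refine ⟨smul_nonneg (by positivity) h₀, ?_⟩
  calc (2 * r)⁻¹ • (a + algebraMap ℝ B r) ≤ (2 * r)⁻¹ • algebraMap ℝ B (2 * r) :=
        smul_le_smul_of_nonneg_left h₁ (by positivity)
    _ = 1 := by
      rw [Algebra.algebraMap_eq_smul_one, smul_smul, inv_mul_cancel₀ (by positivity), one_smul]

end CStarAlgebra

section ComplexStarAlgebra

variable {R : Type*} [Ring R] [StarRing R] [Algebra ℂ R] [StarModule ℂ R] {a b : R}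

theorem Commute.realPart (h : Commute a b) (h' : Commute a (star b)) : Commute (ℜ a : R) b := by
  rw [realPart_apply_coe]
  exact (h.add_left h'.star_left).smul_left _

theorem Commute.imaginaryPart (h : Commute a b) (h' : Commute a (star b)) :
    Commute (ℑ a : R) b := by
  rw [imaginaryPart_apply_coe]
  exact ((h.sub_left h'.star_left).smul_left _).smul_left _

end ComplexStarAlgebra

section VectorState

variable {H : Type*} [NormedAddCommGroup H] [InnerProductSpace ℂ H] [CompleteSpace H]
  (A : StarSubalgebra ℂ (H →L[ℂ] H)) (Ω : H)

@[simps]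
def orbitMap : A →ₗ[ℂ] H where
  toFun a := (a : H →L[ℂ] H) Ω
  map_add' _ _ := rfl
  map_smul' _ _ := rfl

def DominatedPositive (ψ : A →ₗ[ℂ] ℂ) : Prop :=
  ∀ a : A, 0 ≤ ψ (star a * a) ∧ ψ (star a * a) ≤ ((‖(a : H →L[ℂ] H) Ω‖ ^ 2 : ℝ) : ℂ)

variable {A Ω}

theorem orbitMap_mul (a b : A) : orbitMap A Ω (a * b) = (a : H →L[ℂ] H) (orbitMap A Ω b) := rfl

theorem denseRange_orbitMap
    (hcyc : Dense ((Submodule.span ℂ { x : H | ∃ a ∈ A, x = a Ω } : Submodule ℂ H) : Set H)) :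
    DenseRange (orbitMap A Ω) := by
  have : { x : H | ∃ a ∈ A, x = a Ω } = LinearMap.range (orbitMap A Ω) := by
    ext x; simp [eq_comm]
  rwa [this, Submodule.span_eq, LinearMap.coe_range] at hcyc

theorem inner_apply_orbitMap_star_mul {T : H →L[ℂ] H} {a : A} (hT : Commute T (star a : A))
    (b : A) : ⟪Ω, T (orbitMap A Ω (star a * b))⟫_ℂ = ⟪orbitMap A Ω a, T (orbitMap A Ω b)⟫_ℂ := by
  have : T (((star a : A) : H →L[ℂ] H) (orbitMap A Ω b))
      = ((star a : A) : H →L[ℂ] H) (T (orbitMap A Ω b)) :=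
    congrArg (· (orbitMap A Ω b)) hT.eq
  rw [orbitMap_mul, this, StarMemClass.coe_star, ContinuousLinearMap.star_eq_adjoint,
    ContinuousLinearMap.adjoint_inner_right]
  rfl

theorem inner_orbitMap_star_mul (a b : A) :
    ⟪Ω, orbitMap A Ω (star a * b)⟫_ℂ = ⟪orbitMap A Ω a, orbitMap A Ω b⟫_ℂ := by
  simpa using inner_apply_orbitMap_star_mul (Commute.one_left ((star a : A) : H →L[ℂ] H)) b

theorem DominatedPositive.norm_starMulForm_le {ψ : A →ₗ[ℂ] ℂ} (hψ : DominatedPositive A Ω ψ)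
    (a b : A) : ‖ψ.starMulForm a b‖ ≤ ‖orbitMap A Ω a‖ * ‖orbitMap A Ω b‖ := by
  have hnonneg : ψ.starMulForm.IsNonneg := ⟨fun a => (hψ a).1⟩
  have hre : ∀ a : A, (ψ.starMulForm a a).re ≤ ‖orbitMap A Ω a‖ ^ 2 := fun a =>
    by exact_mod_cast (Complex.le_def.mp (hψ a).2).1
  rw [← pow_le_pow_iff_left₀ (norm_nonneg _) (by positivity) two_ne_zero, mul_pow]
  exact (hnonneg.norm_apply_sq_le a b).trans <| mul_le_mul (hre a) (hre b)
    (hnonneg.nonneg b |> Complex.le_def.mp |>.1) (by positivity)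

theorem exists_commute_inner_eq_of_dominatedPositive (hcyc : DenseRange (orbitMap A Ω))
    {ψ : A →ₗ[ℂ] ℂ} (hψ : DominatedPositive A Ω ψ) :
    ∃ T : H →L[ℂ] H, (∀ a ∈ A, Commute T a) ∧
      ∀ a b : A, ⟪orbitMap A Ω a, T (orbitMap A Ω b)⟫_ℂ = ψ (star a * b) := by
  obtain ⟨T, hT⟩ := exists_inner_map_eq_of_norm_le hcyc ψ.starMulForm zero_le_one
    fun a b => (one_mul ‖orbitMap A Ω a‖).symm ▸ hψ.norm_starMulForm_le a b
  refine ⟨T, fun c hc => ContinuousLinearMap.ext_inner_of_denseRange hcyc fun a b => ?_, hT⟩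
  let c' : A := ⟨c, hc⟩
  have hright : (T * c) (orbitMap A Ω b) = T (orbitMap A Ω (c' * b)) := rfl
  have hleft : ⟪orbitMap A Ω a, (c * T) (orbitMap A Ω b)⟫_ℂ
      = ⟪orbitMap A Ω (star c' * a), T (orbitMap A Ω b)⟫_ℂ := by
    rw [orbitMap_mul, StarMemClass.coe_star, ContinuousLinearMap.star_eq_adjoint,
      ContinuousLinearMap.adjoint_inner_left]
    rfl
  simp only [hright, hleft, hT, LinearMap.starMulForm_apply, star_mul, star_star, mul_assoc]

theorem DominatedPositive.exists_eq_smul (hΩ : ‖Ω‖ = 1) (hcyc : DenseRange (orbitMap A Ω))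
    (hcom : ∀ T : H →L[ℂ] H, (∀ a ∈ A, Commute T a) → ∃ c : ℂ, T = c • 1)
    {ψ : A →ₗ[ℂ] ℂ} (hψ : DominatedPositive A Ω ψ) :
    ∃ l : ℝ, 0 ≤ l ∧ l ≤ 1 ∧ ∀ a : A, ψ a = l * ⟪Ω, (a : H →L[ℂ] H) Ω⟫_ℂ := by
  obtain ⟨T, hTA, hT⟩ := exists_commute_inner_eq_of_dominatedPositive hcyc hψ
  obtain ⟨c, rfl⟩ := hcom T hTA
  have hψc : ∀ a : A, ψ a = c * ⟪Ω, (a : H →L[ℂ] H) Ω⟫_ℂ := fun a => by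
    simpa [inner_smul_right] using (hT 1 a).symm
  have hψ1 : ψ 1 = c := by simp [hψc, inner_self_eq_norm_sq_to_K, hΩ]
  obtain ⟨h0, h1⟩ := hψ 1
  simp only [star_one, one_mul, hψ1] at h0 h1
  obtain ⟨l, hl, rfl⟩ := RCLike.nonneg_iff_exists_ofReal.mp h0
  exact ⟨l, hl, Complex.real_le_real.mp (by simpa [hΩ] using h1), hψc⟩

theorem exists_eq_smul_one_of_mem_Icc (hcyc : DenseRange (orbitMap A Ω))
    (hpure : ∀ ψ, DominatedPositive A Ω ψ → ∃ c : ℂ, ∀ a : A, ψ a = c * ⟪Ω, (a : H →L[ℂ] H) Ω⟫_ℂ)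
    {Q : H →L[ℂ] H} (hQA : ∀ a ∈ A, Commute Q a) (hQ : Q ∈ Set.Icc 0 1) :
    ∃ c : ℂ, Q = c • 1 := by
  let ψ : A →ₗ[ℂ] ℂ := innerₛₗ ℂ Ω ∘ₗ (Q : H →ₗ[ℂ] H) ∘ₗ orbitMap A Ω
  have hψ : ∀ a b : A, ψ (star a * b) = ⟪orbitMap A Ω a, Q (orbitMap A Ω b)⟫_ℂ := fun a b =>
    inner_apply_orbitMap_star_mul (hQA _ (star a).2) b
  have hdom : DominatedPositive A Ω ψ := by
    intro a
    rw [hψ]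
    refine ⟨((ContinuousLinearMap.nonneg_iff_isPositive _).mp hQ.1).inner_nonneg_right _, ?_⟩
    have := ((ContinuousLinearMap.le_def _ _).mp hQ.2).inner_nonneg_right (orbitMap A Ω a)
    rw [sub_apply, inner_sub_right, one_apply_eq_self,
      inner_self_eq_norm_sq_to_K, sub_nonneg] at this
    exact_mod_cast this
  obtain ⟨c, hc⟩ := hpure ψ hdom
  refine ⟨c, ContinuousLinearMap.ext_inner_of_denseRange hcyc fun a b => ?_⟩
  rw [← hψ, hc, ← orbitMap_apply, inner_orbitMap_star_mul, smul_apply,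
    one_apply_eq_self, inner_smul_right]

theorem exists_eq_smul_one_of_isSelfAdjoint (hcyc : DenseRange (orbitMap A Ω))
    (hpure : ∀ ψ, DominatedPositive A Ω ψ → ∃ c : ℂ, ∀ a : A, ψ a = c * ⟪Ω, (a : H →L[ℂ] H) Ω⟫_ℂ)
    {S : H →L[ℂ] H} (hSA : ∀ a ∈ A, Commute S a) (hS : IsSelfAdjoint S) :
    ∃ c : ℂ, S = c • 1 := by
  set r := ‖S‖ + 1
  have hr : 0 < r := by positivity
  set Q := (2 * r)⁻¹ • (S + algebraMap ℝ _ r)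
  have hQA : ∀ a ∈ A, Commute Q a := fun a ha =>
    ((hSA a ha).add_left (Algebra.commutes r a)).smul_left _
  obtain ⟨c, hc⟩ := exists_eq_smul_one_of_mem_Icc hcyc hpure hQA
    (hS.smul_add_algebraMap_mem_Icc hr (le_add_of_nonneg_right zero_le_one))
  refine ⟨2 * r * c - r, ?_⟩
  have : S = (2 * r) • Q - algebraMap ℝ _ r := by
    rw [smul_smul, mul_inv_cancel₀ (by positivity), one_smul, add_sub_cancel_right]
  rw [this, hc, Algebra.algebraMap_eq_smul_one]
  module

end VectorState

/-- Purity of a vector state is equivalent to triviality of the commutant: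
for a unit vector `Ω` cyclic for a unital star-subalgebra `A` of bounded
operators, with vector state `ω(a) = ⟪Ω, a Ω⟫`, the following are
equivalent: (1) every dominated positive linear functional
(`0 ≤ ψ(a* a) ≤ ‖a Ω‖²`) is a multiple `λ ω` with `0 ≤ λ ≤ 1`;
(2) every bounded operator commuting with `A` is a scalar. -/
theorem vector_state_pure_iff_commutant_trivial
    (H : Type*) [NormedAddCommGroup H] [InnerProductSpace ℂ H] [CompleteSpace H]
    (A : StarSubalgebra ℂ (H →L[ℂ] H))
    (Ω : H) (hΩ : ‖Ω‖ = 1)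
    (hcyc : Dense ((Submodule.span ℂ { x : H | ∃ a ∈ A, x = a Ω } : Submodule ℂ H) : Set H)) :
    (∀ ψ : A →ₗ[ℂ] ℂ,
        (∀ a : A, 0 ≤ ψ (star a * a) ∧
          ψ (star a * a) ≤ ((‖(a : H →L[ℂ] H) Ω‖ ^ 2 : ℝ) : ℂ)) →
        ∃ l : ℝ, 0 ≤ l ∧ l ≤ 1 ∧
          ∀ a : A, ψ a = (l : ℂ) * (inner ℂ Ω ((a : H →L[ℂ] H) Ω) : ℂ)) ↔
      (∀ T : H →L[ℂ] H, (∀ a ∈ A, T * a = a * T) → ∃ c : ℂ, T = c • 1) := by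
  have hu := denseRange_orbitMap hcyc
  refine ⟨fun hpure T hT => ?_, fun hcom ψ hψ => DominatedPositive.exists_eq_smul hΩ hu hcom hψ⟩
  have hsa : ∀ S : H →L[ℂ] H, (∀ a ∈ A, Commute S a) → IsSelfAdjoint S → ∃ c : ℂ, S = c • 1 :=
    fun S => exists_eq_smul_one_of_isSelfAdjoint hu fun ψ hψ =>
      let ⟨l, _, _, hl⟩ := hpure ψ hψ; ⟨l, hl⟩
  have hTA : ∀ a ∈ A, Commute T (star a) := fun a ha => hT _ (star_mem ha)
  obtain ⟨x, hx⟩ := hsa _ (fun a ha => Commute.realPart (hT a ha) (hTA a ha)) (ℜ T).2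
  obtain ⟨y, hy⟩ := hsa _ (fun a ha => Commute.imaginaryPart (hT a ha) (hTA a ha)) (ℑ T).2
  refine ⟨x + Complex.I * y, ?_⟩
  rw [← realPart_add_I_smul_imaginaryPart T, hx, hy, smul_smul, add_smul]
end
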